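/- For every nonnegative integer n, ∑_{i=0}^{n} [Γ(n-i+1/2)/Γ(n-i+1)]·[Γ(n+i+3/2)/Γ(n+i+2)] = π/2. -/

import Mathlib

open Finset Real

/-!
Put `a k = Γ(k + 1/2) / Γ(k + 1)`, so that `(k + 1) a (k + 1) = (k + 1/2) a k` and `a 0 = √π`.
For any sequence with `(k + 1) a (k + 1) = (k + c) a k`, the self-convolution
`S m = ∑_{i+j=m} a i a j` satisfies `(m + 1) S (m + 1) = (m + 2c) S m`: write
`(m + 1) S (m + 1)` as `2 ∑ i a i a j` using the symmetry `i ↔ j`, shift `i` by one and apply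
the recurrence. For `c = 1/2` the convolution is therefore constant, equal to `S 0 = π`.
The sum in the theorem is the half of `S (2n + 1)` with `i ≤ n`; the other half is its mirror
image.
-/

namespace Finset.Nat

theorem sum_antidiagonal_two_mul_add_one {M : Type*} [AddCommMonoid M] (f : ℕ → ℕ → M)
    (n : ℕ) :
    ∑ p ∈ antidiagonal (2 * n + 1), f p.1 p.2 =
      ∑ i ∈ range (n + 1), (f (n - i) (n + 1 + i) + f (n + 1 + i) (n - i)) := by
  rw [sum_antidiagonal_eq_sum_range_succ, show (2 * n + 1).succ = (n + 1) + (n + 1) by omega,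
    sum_range_add, sum_add_distrib, ← sum_range_reflect]
  congr 1 <;> refine sum_congr rfl fun i hi => ?_ <;> have := mem_range.mp hi <;>
    congr 1 <;> omega

end Finset.Nat

section SelfConvolution

variable {R : Type*} [CommSemiring R] (a : ℕ → R)

def selfConv (m : ℕ) : R := ∑ p ∈ antidiagonal m, a p.1 * a p.2

theorem two_mul_sum_antidiagonal_fst_mul (m : ℕ) :
    2 * ∑ p ∈ antidiagonal m, (p.1 : R) * (a p.1 * a p.2) = m * selfConv a m := by
  have hswap : ∑ p ∈ antidiagonal m, (p.1 : R) * (a p.1 * a p.2) =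
      ∑ p ∈ antidiagonal m, (p.2 : R) * (a p.1 * a p.2) := by
    rw [← Nat.sum_antidiagonal_swap]
    refine sum_congr rfl fun p _ => ?_
    rw [Prod.fst_swap, Prod.snd_swap, mul_comm (a p.2)]
  rw [two_mul]
  nth_rw 2 [hswap]
  rw [← sum_add_distrib, selfConv, mul_sum]
  refine sum_congr rfl fun p hp => ?_
  rw [← (mem_antidiagonal.mp hp), Nat.cast_add]
  ring

variable {a}

theorem succ_mul_selfConv_succ {c : R} (h : ∀ k : ℕ, (k + 1) * a (k + 1) = (k + c) * a k)
    (m : ℕ) : (m + 1) * selfConv a (m + 1) = (m + 2 * c) * selfConv a m := by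
  calc (m + 1) * selfConv a (m + 1)
      = 2 * ∑ p ∈ antidiagonal (m + 1), (p.1 : R) * (a p.1 * a p.2) := by
        rw [two_mul_sum_antidiagonal_fst_mul, Nat.cast_succ]
    _ = 2 * ∑ p ∈ antidiagonal m, ((p.1 : R) + 1) * a (p.1 + 1) * a p.2 := by
        rw [Nat.sum_antidiagonal_succ]
        simp only [Nat.cast_zero, zero_mul, zero_add, Nat.cast_succ, mul_assoc]
    _ = 2 * ∑ p ∈ antidiagonal m, (p.1 : R) * (a p.1 * a p.2) + 2 * c * selfConv a m := by
        rw [selfConv, mul_sum, mul_sum, mul_sum, ← sum_add_distrib]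
        refine sum_congr rfl fun p _ => ?_
        rw [h]
        ring
    _ = (m + 2 * c) * selfConv a m := by
        rw [two_mul_sum_antidiagonal_fst_mul, add_mul]

end SelfConvolution

theorem selfConv_eq_selfConv_zero {K : Type*} [Field K] [CharZero K] {a : ℕ → K}
    (h : ∀ k : ℕ, (k + 1) * a (k + 1) = (k + 1/2) * a k) (m : ℕ) :
    selfConv a m = selfConv a 0 := by
  induction m with
  | zero => rfl
  | succ m ih =>
    have := succ_mul_selfConv_succ h m
    rw [show (m : K) + 2 * (1/2) = m + 1 by ring] at this
    rw [mul_left_cancel₀ (Nat.cast_add_one_ne_zero m) this, ih]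

noncomputable def gammaHalfRatio (k : ℕ) : ℝ := Gamma (k + 1/2) / Gamma (k + 1)

theorem succ_mul_gammaHalfRatio_succ (k : ℕ) :
    (k + 1) * gammaHalfRatio (k + 1) = (k + 1/2) * gammaHalfRatio k := by
  rw [gammaHalfRatio, gammaHalfRatio, Nat.cast_succ, show (k : ℝ) + 1 + 1/2 = k + 1/2 + 1 by ring,
    Gamma_add_one (by positivity), Gamma_add_one (by positivity)]
  field_simp

theorem selfConv_gammaHalfRatio (m : ℕ) : selfConv gammaHalfRatio m = π := by
  rw [selfConv_eq_selfConv_zero succ_mul_gammaHalfRatio_succ, selfConv, Nat.antidiagonal_zero,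
    sum_singleton, gammaHalfRatio, Nat.cast_zero, zero_add, zero_add, Gamma_one,
    div_one, Gamma_one_half_eq, mul_self_sqrt pi_nonneg]

theorem gamma_sum_identity_2 (n : ℕ) :
    ∑ i ∈ Finset.range (n + 1),
      (Real.Gamma ((n : ℝ) - i + 1/2) / Real.Gamma ((n : ℝ) - i + 1)) *
        (Real.Gamma ((n : ℝ) + i + 3/2) / Real.Gamma ((n : ℝ) + i + 2)) =
      π / 2 := by
  have hterm : ∀ i ∈ range (n + 1),
      (Gamma ((n : ℝ) - i + 1/2) / Gamma ((n : ℝ) - i + 1)) *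
        (Gamma ((n : ℝ) + i + 3/2) / Gamma ((n : ℝ) + i + 2)) =
      gammaHalfRatio (n - i) * gammaHalfRatio (n + 1 + i) := fun i hi => by
    rw [gammaHalfRatio, gammaHalfRatio, Nat.cast_sub (by have := mem_range.mp hi; omega)]
    push_cast
    ring_nf
  have hsplit : selfConv gammaHalfRatio (2 * n + 1) =
      2 * ∑ i ∈ range (n + 1), gammaHalfRatio (n - i) * gammaHalfRatio (n + 1 + i) := by
    rw [selfConv, mul_sum,
      Nat.sum_antidiagonal_two_mul_add_one (fun i j => gammaHalfRatio i * gammaHalfRatio j)]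
    exact sum_congr rfl fun i _ => by ring
  rw [sum_congr rfl hterm]
  linarith [selfConv_gammaHalfRatio (2 * n + 1)]
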